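/- For all integers k ≥ 1 and n with 1 ≤ n ≤ k, the graph Δ^L_{k,n} has diameter at most 2: any two distinct vertices are joined by a path of length at most 2. -/

import Mathlib

inductive V (k n : ℕ) where
  | c : V k n
  | a : Fin k → V k n
  | b : Fin (k + n) → V k n
deriving DecidableEq, Fintype

def adj (k n : ℕ) : V k n → V k n → Prop
  | .a i, .a j => i ≠ j
  | .b i, .b j => i ≠ j
  | .a i, .b j => (j : ℕ) = (i : ℕ) ∨ (j : ℕ) = k + i
  | .b j, .a i => (j : ℕ) = (i : ℕ) ∨ (j : ℕ) = k + i
  | .c, .a _ => True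
  | .a _, .c => True
  | _, _ => False

instance (k n : ℕ) : DecidableRel (adj k n) := fun x y => by
  cases x <;> cases y <;> simp only [adj] <;> infer_instance

def DeltaL (k n : ℕ) : SimpleGraph (V k n) where
  Adj := adj k n
  symm := by
    constructor
    intro x y h
    cases x <;> cases y <;> simp_all [adj] <;> tauto
  loopless := by
    constructor
    intro x h
    cases x <;> simp_all [adj]

lemma dist_le_two_of_walk {V : Type*} {G : SimpleGraph V} {x y : V}
    (p : G.Walk x y) (hp : p.length ≤ 2) : G.dist x y ≤ 2 :=
  le_trans (SimpleGraph.dist_le p) hp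

lemma ca_aux (k n : ℕ) (hn1 : 1 ≤ n) (hnk : n ≤ k) (j : Fin (k + n)) :
    (DeltaL k n).dist .c (.b j) ≤ 2 := by
  by_cases h : (j : ℕ) < k
  · have h2 : (DeltaL k n).Adj (.a ⟨j, h⟩) (.b j) := Or.inl rfl
    have h1 : (DeltaL k n).Adj .c (.a ⟨j, h⟩) := trivial
    exact dist_le_two_of_walk
      (SimpleGraph.Walk.cons h1
        (SimpleGraph.Walk.cons h2 SimpleGraph.Walk.nil)) (by simp)
  · have hj : (j : ℕ) - k < k := by omega
    have h2 : (DeltaL k n).Adj (.a ⟨(j : ℕ) - k, hj⟩) (.b j) := Or.inr (by simp; omega)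
    have h1 : (DeltaL k n).Adj .c (.a ⟨(j : ℕ) - k, hj⟩) := trivial
    exact dist_le_two_of_walk
      (SimpleGraph.Walk.cons h1
        (SimpleGraph.Walk.cons h2 SimpleGraph.Walk.nil)) (by simp)

lemma ab_aux (k n : ℕ) (i : Fin k) (j : Fin (k + n)) :
    (DeltaL k n).dist (.a i) (.b j) ≤ 2 := by
  by_cases h : (j : ℕ) = (i : ℕ) ∨ (j : ℕ) = k + i
  · exact le_trans (SimpleGraph.dist_le
      (SimpleGraph.Walk.cons h SimpleGraph.Walk.nil)) (by exact Nat.le_succ 1)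
  · push_neg at h
    have hi : (i : ℕ) < k + n := by omega
    have h2 : (DeltaL k n).Adj (.b ⟨i, hi⟩) (.b j) := by
      intro he
      exact h.1 (by rw [← he])
    have h1 : (DeltaL k n).Adj (.a i) (.b ⟨i, hi⟩) := Or.inl rfl
    exact dist_le_two_of_walk
      (SimpleGraph.Walk.cons h1
        (SimpleGraph.Walk.cons h2 SimpleGraph.Walk.nil)) (by simp)

theorem stmt3 (k n : ℕ) (hk : 1 ≤ k) (hn1 : 1 ≤ n) (hnk : n ≤ k)
    (x y : V k n) (hxy : x ≠ y) : (DeltaL k n).dist x y ≤ 2 := by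
  have one_le_two : (1 : ℕ) ≤ 2 := by norm_num
  cases x with
  | c => cases y with
    | c => exact absurd rfl hxy
    | a i => exact le_trans (SimpleGraph.dist_le
        (SimpleGraph.Walk.cons trivial SimpleGraph.Walk.nil)) (by exact Nat.le_succ 1)
    | b j => exact ca_aux k n hn1 hnk j
  | a i => cases y with
    | c => exact le_trans (SimpleGraph.dist_le
        (SimpleGraph.Walk.cons trivial SimpleGraph.Walk.nil)) (by exact Nat.le_succ 1)
    | a j => exact le_trans (SimpleGraph.dist_le
        (SimpleGraph.Walk.cons (fun h => hxy (by rw [h])) SimpleGraph.Walk.nil)) (by exact Nat.le_succ 1)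
    | b j => exact ab_aux k n i j
  | b j => cases y with
    | c => rw [SimpleGraph.dist_comm]; exact ca_aux k n hn1 hnk j
    | a i => rw [SimpleGraph.dist_comm]; exact ab_aux k n i j
    | b i => exact le_trans (SimpleGraph.dist_le
        (SimpleGraph.Walk.cons (fun h => hxy (by rw [h])) SimpleGraph.Walk.nil)) (by exact Nat.le_succ 1)
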